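/- arXiv:2305.11450 — 3 statements merged into one kernel-verified Lean document; each statement's English description precedes it below -/
import Mathlib

section
/- (One step of the QR-based iteration preserves the factorization.) Let B ∈ ℝ^{r×n} and suppose B = L D R where L ∈ ℝ^{r×r} has orthonormal columns, D ∈ ℝ^{r×r}, and R ∈ ℝ^{r×n} satisfies RRᵀ = I. Let B Rᵀ = L' T be a QR decomposition (L'ᵀL' = I, T upper triangular invertible) and let Bᵀ L' = R'' D' be a QR decomposition with R''ᵀR'' = I. Then B = L' D'ᵀ R''ᵀ. -/
open Matrix

theorem qr_step_preserves_factorization (r n : ℕ)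
    (B : Matrix (Fin r) (Fin n) ℝ)
    (L D : Matrix (Fin r) (Fin r) ℝ) (R : Matrix (Fin r) (Fin n) ℝ)
    (hB : B = L * D * R) (hL : Lᵀ * L = 1) (hR : R * Rᵀ = 1)
    (L' T : Matrix (Fin r) (Fin r) ℝ)
    (hQR1 : B * Rᵀ = L' * T) (hL' : L'ᵀ * L' = 1)
    (hT : T.BlockTriangular id) (hTinv : Invertible T)
    (R'' : Matrix (Fin n) (Fin r) ℝ) (D' : Matrix (Fin r) (Fin r) ℝ)
    (hQR2 : Bᵀ * L' = R'' * D') (hR'' : R''ᵀ * R'' = 1)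
    (hD' : D'.BlockTriangular id) :
    B = L' * D'ᵀ * R''ᵀ := by
  have hL'2 : L' * L'ᵀ = 1 := mul_eq_one_comm.mp hL'
  have h : L'ᵀ * B = D'ᵀ * R''ᵀ := by
    have := congrArg Matrix.transpose hQR2
    simpa [Matrix.transpose_mul] using this
  calc B = (L' * L'ᵀ) * B := by rw [hL'2, Matrix.one_mul]
    _ = L' * (L'ᵀ * B) := by rw [Matrix.mul_assoc]
    _ = L' * (D'ᵀ * R''ᵀ) := by rw [h]
    _ = L' * D'ᵀ * R''ᵀ := by rw [Matrix.mul_assoc]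
end

section
/- (Deterministic error bound.) Let A = UΣVᵀ be an SVD of A ∈ ℝ^{m×n}, partitioned with Σ₁ ∈ ℝ^{k×k} containing the top k singular values and Σ₂ the rest, and V = [V₁ V₂] correspondingly. Let Ω ∈ ℝ^{n×r} with r ≥ k, set Ω₁ = V₁ᵀΩ, Ω₂ = V₂ᵀΩ, Y = AΩ, and let P_Y be the orthogonal projection onto the range of Y. If Ω₁ has full row rank, then ‖(I − P_Y)A‖_F² ≤ ‖Σ₂‖_F² + ‖Σ₂ Ω₂ Ω₁†‖_F². -/
/-!
Compare `A` with `Y X` for `X = Ω₁† V₁ᵀ`. Since `(I - P) Y = 0` and `I - P` is an orthogonal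
projection, `‖(I - P) A‖_F ≤ ‖A - Y X‖_F`. Splitting `I = V₁ V₁ᵀ + V₂ V₂ᵀ` and using
`Ω₁ Ω₁† = I` (full row rank) gives `A - Y X = A V₂ (V₂ᵀ - Ω₂ Ω₁† V₁ᵀ) = U₂ Σ₂ (V₂ᵀ - Ω₂ Ω₁† V₁ᵀ)`,
and the two terms are Frobenius-orthogonal because `V₂ᵀ V₁ = 0`, so the squared norm is
`‖Σ₂‖_F² + ‖Σ₂ Ω₂ Ω₁†‖_F²`.
-/

open Matrix

noncomputable def frob {m n : ℕ} (A : Matrix (Fin m) (Fin n) ℝ) : ℝ :=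
  Real.sqrt (∑ i, ∑ j, (A i j) ^ 2)

def IsMoorePenrose {a b : ℕ} (A : Matrix (Fin a) (Fin b) ℝ)
    (B : Matrix (Fin b) (Fin a) ℝ) : Prop :=
  A * B * A = A ∧ B * A * B = B ∧ (A * B)ᵀ = A * B ∧ (B * A)ᵀ = B * A

section Frobenius

variable {a b c d : ℕ}

lemma frob_sq_eq_trace (M : Matrix (Fin a) (Fin b) ℝ) : frob M ^ 2 = trace (M * Mᵀ) := by
  rw [frob, Real.sq_sqrt (by positivity)]
  simp [trace, mul_apply, sq]

lemma frob_add_sq (M N : Matrix (Fin a) (Fin b) ℝ) :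
    frob (M + N) ^ 2 = frob M ^ 2 + 2 * trace (M * Nᵀ) + frob N ^ 2 := by
  have hsymm : trace (N * Mᵀ) = trace (M * Nᵀ) := by
    rw [← trace_transpose, transpose_mul, transpose_transpose]
  simp only [frob_sq_eq_trace, transpose_add, Matrix.add_mul, Matrix.mul_add, trace_add, hsymm]
  ring

lemma frob_sub_sq (M N : Matrix (Fin a) (Fin b) ℝ) :
    frob (M - N) ^ 2 = frob M ^ 2 - 2 * trace (M * Nᵀ) + frob N ^ 2 := by
  have hneg : frob (-N) = frob N := by simp [frob]
  rw [sub_eq_add_neg, frob_add_sq, hneg, transpose_neg, Matrix.mul_neg, trace_neg]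
  ring

lemma frob_one_sub_mul_sq_le (P : Matrix (Fin a) (Fin a) ℝ) (hPsymm : Pᵀ = P)
    (hPidem : P * P = P) (N : Matrix (Fin a) (Fin b) ℝ) :
    frob ((1 - P) * N) ^ 2 ≤ frob N ^ 2 := by
  have hQP : (1 - P) * P = 0 := by rw [Matrix.sub_mul, Matrix.one_mul, hPidem, sub_self]
  have hcross : trace (P * N * ((1 - P) * N)ᵀ) = 0 := by
    rw [transpose_mul, transpose_sub, transpose_one, hPsymm, trace_mul_comm, Matrix.mul_assoc,
      ← Matrix.mul_assoc (1 - P), hQP, Matrix.zero_mul, Matrix.mul_zero, trace_zero]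
  have hsplit := frob_add_sq (P * N) ((1 - P) * N)
  rw [← Matrix.add_mul, add_sub_cancel, Matrix.one_mul, hcross] at hsplit
  linarith [sq_nonneg (frob (P * N))]

lemma frob_one_sub_mul_sq_le_frob_sub_mul_sq (P : Matrix (Fin a) (Fin a) ℝ) (hPsymm : Pᵀ = P)
    (hPidem : P * P = P) (Y : Matrix (Fin a) (Fin c) ℝ) (hPY : P * Y = Y)
    (N : Matrix (Fin a) (Fin b) ℝ) (X : Matrix (Fin c) (Fin b) ℝ) :
    frob ((1 - P) * N) ^ 2 ≤ frob (N - Y * X) ^ 2 := by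
  have hQY : (1 - P) * (Y * X) = 0 := by
    rw [← Matrix.mul_assoc, Matrix.sub_mul, Matrix.one_mul, hPY, sub_self, Matrix.zero_mul]
  simpa [Matrix.mul_sub, hQY] using frob_one_sub_mul_sq_le P hPsymm hPidem (N - Y * X)

lemma frob_mul_sq_of_transpose_mul_self (U : Matrix (Fin a) (Fin b) ℝ) (hU : Uᵀ * U = 1)
    (N : Matrix (Fin b) (Fin c) ℝ) : frob (U * N) ^ 2 = frob N ^ 2 := by
  rw [frob_sq_eq_trace, frob_sq_eq_trace, transpose_mul, Matrix.mul_assoc, trace_mul_comm,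
    Matrix.mul_assoc, Matrix.mul_assoc Nᵀ, hU, Matrix.mul_one]

lemma frob_mul_transpose_sq_of_transpose_mul_self (Q : Matrix (Fin c) (Fin b) ℝ)
    (hQ : Qᵀ * Q = 1) (N : Matrix (Fin a) (Fin b) ℝ) : frob (N * Qᵀ) ^ 2 = frob N ^ 2 := by
  rw [frob_sq_eq_trace, frob_sq_eq_trace, transpose_mul, transpose_transpose, Matrix.mul_assoc,
    ← Matrix.mul_assoc Qᵀ, hQ, Matrix.one_mul]

lemma frob_mul_transpose_sub_mul_transpose_sq (Q₁ : Matrix (Fin c) (Fin b) ℝ)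
    (Q₂ : Matrix (Fin c) (Fin a) ℝ) (hQ₁ : Q₁ᵀ * Q₁ = 1) (hQ₂ : Q₂ᵀ * Q₂ = 1)
    (hQ₁₂ : Q₁ᵀ * Q₂ = 0) (M : Matrix (Fin d) (Fin b) ℝ) (N : Matrix (Fin d) (Fin a) ℝ) :
    frob (M * Q₁ᵀ - N * Q₂ᵀ) ^ 2 = frob M ^ 2 + frob N ^ 2 := by
  have hcross : trace (M * Q₁ᵀ * (N * Q₂ᵀ)ᵀ) = 0 := by
    rw [transpose_mul, transpose_transpose, Matrix.mul_assoc, ← Matrix.mul_assoc Q₁ᵀ, hQ₁₂,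
      Matrix.zero_mul, Matrix.mul_zero, trace_zero]
  rw [frob_sub_sq, hcross, frob_mul_transpose_sq_of_transpose_mul_self Q₁ hQ₁,
    frob_mul_transpose_sq_of_transpose_mul_self Q₂ hQ₂]
  ring

end Frobenius

def Fin.natAddLE {k n : ℕ} (hk : k ≤ n) (j : Fin (n - k)) : Fin n := ⟨k + j, by omega⟩

lemma Fin.natAddLE_injective {k n : ℕ} (hk : k ≤ n) : Function.Injective (Fin.natAddLE hk) :=
  fun i j h => Fin.ext (by simpa [Fin.natAddLE] using congrArg Fin.val h)

lemma Fin.castLE_ne_natAddLE {k n : ℕ} (hk : k ≤ n) (i : Fin k) (j : Fin (n - k)) :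
    Fin.castLE hk i ≠ Fin.natAddLE hk j :=
  fun h => by have := congrArg Fin.val h; simp [Fin.natAddLE] at this; omega

lemma Fin.sum_univ_eq_sum_castLE_add_sum_natAddLE {M : Type*} [AddCommMonoid M] {k n : ℕ}
    (hk : k ≤ n) (f : Fin n → M) :
    ∑ i, f i = ∑ i : Fin k, f (Fin.castLE hk i) + ∑ j : Fin (n - k), f (Fin.natAddLE hk j) := by
  let e : Fin k ⊕ Fin (n - k) ≃ Fin n := finSumFinEquiv.trans (finCongr (by omega))
  rw [← e.sum_comp, Fintype.sum_sum_type]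
  rfl

namespace Matrix

lemma one_submatrix_natAddLE_castLE {R : Type*} [Zero R] [One R] {k n : ℕ} (hk : k ≤ n) :
    (1 : Matrix (Fin n) (Fin n) R).submatrix (Fin.natAddLE hk) (Fin.castLE hk) = 0 := by
  ext i j
  simp [(Fin.castLE_ne_natAddLE hk j i).symm]

variable {ι κ α β R : Type*} [Ring R]

lemma transpose_submatrix_mul_submatrix [Fintype ι] (Q : Matrix ι κ R) (e : α → κ)
    (f : β → κ) : (Q.submatrix id e)ᵀ * Q.submatrix id f = (Qᵀ * Q).submatrix e f := by
  ext; simp [mul_apply]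

lemma transpose_submatrix_mul_submatrix_self [Fintype ι] [DecidableEq κ] [DecidableEq α]
    (Q : Matrix ι κ R) (hQ : Qᵀ * Q = 1) {e : α → κ} (he : Function.Injective e) :
    (Q.submatrix id e)ᵀ * Q.submatrix id e = 1 := by
  rw [transpose_submatrix_mul_submatrix, hQ, submatrix_one _ he]

lemma submatrix_castLE_mul_transpose_add_submatrix_natAddLE_mul_transpose {k n : ℕ}
    (hk : k ≤ n) (Q : Matrix ι (Fin n) R) :
    Q.submatrix id (Fin.castLE hk) * (Q.submatrix id (Fin.castLE hk))ᵀ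
      + Q.submatrix id (Fin.natAddLE hk) * (Q.submatrix id (Fin.natAddLE hk))ᵀ = Q * Qᵀ := by
  ext; simp [mul_apply, Fin.sum_univ_eq_sum_castLE_add_sum_natAddLE hk]

lemma mul_diagonal_mul_transpose_mul_submatrix [Fintype κ] [Fintype α] [DecidableEq κ]
    [DecidableEq α]
    (U : Matrix ι κ R) (d : κ → R) (V : Matrix κ κ R) (hV : Vᵀ * V = 1) (e : α → κ) :
    U * diagonal d * Vᵀ * V.submatrix id e = U.submatrix id e * diagonal (d ∘ e) := by
  have hVe : Vᵀ * V.submatrix id e = (1 : Matrix κ κ R).submatrix id e := by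
    rw [← hV, submatrix_mul Vᵀ V id id e Function.bijective_id, submatrix_id_id]
  rw [Matrix.mul_assoc, hVe, ← Equiv.coe_refl, mul_submatrix_one]
  ext
  simp [mul_diagonal]

lemma mul_eq_one_of_mul_mul_self_of_rank_eq {K : Type*} [Field K] [Fintype α] [Fintype β]
    [DecidableEq α]
    (M : Matrix α β K) (B : Matrix β α K) (hMBM : M * B * M = M)
    (hrank : M.rank = Fintype.card α) : M * B = 1 := by
  have hsurj : Function.Surjective M.mulVecLin := by
    rw [← LinearMap.range_eq_top]
    apply Submodule.eq_top_of_finrank_eq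
    rw [← Matrix.rank, hrank, Module.finrank_fintype_fun_eq_card]
  ext i j
  obtain ⟨x, hx⟩ := hsurj (Pi.single j 1)
  have hcol : (M * B) *ᵥ Pi.single j 1 = Pi.single j 1 := by
    rw [← hx, mulVecLin_apply, mulVec_mulVec, hMBM]
  simpa [one_apply, Pi.single_apply, eq_comm] using congrFun hcol i

lemma sub_mul_mul_mul_transpose_eq [Fintype κ] [Fintype α] [Fintype β] [DecidableEq κ]
    [DecidableEq α]
    {ρ : Type*} [Fintype ρ] (A : Matrix ι κ R) (Ω : Matrix κ ρ R) (V₁ : Matrix κ α R) (V₂ : Matrix κ β R)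
    (hV : V₁ * V₁ᵀ + V₂ * V₂ᵀ = 1) (B : Matrix ρ α R) (hB : V₁ᵀ * Ω * B = 1) :
    A - A * Ω * (B * V₁ᵀ) = A * V₂ * (V₂ᵀ - V₂ᵀ * Ω * B * V₁ᵀ) := by
  have hA : A = A * V₁ * V₁ᵀ + A * V₂ * V₂ᵀ := by
    rw [Matrix.mul_assoc, Matrix.mul_assoc, ← Matrix.mul_add, hV, Matrix.mul_one]
  have hΩ : Ω = V₁ * V₁ᵀ * Ω + V₂ * V₂ᵀ * Ω := by rw [← Matrix.add_mul, hV, Matrix.one_mul]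
  have hAΩ : A * Ω * (B * V₁ᵀ) = A * V₁ * V₁ᵀ + A * V₂ * (V₂ᵀ * Ω * B * V₁ᵀ) :=
    calc A * Ω * (B * V₁ᵀ)
        = A * V₁ * (V₁ᵀ * Ω * B) * V₁ᵀ + A * V₂ * (V₂ᵀ * Ω * B * V₁ᵀ) := by
          nth_rewrite 1 [hΩ]
          simp only [Matrix.mul_add, Matrix.add_mul, Matrix.mul_assoc]
      _ = A * V₁ * V₁ᵀ + A * V₂ * (V₂ᵀ * Ω * B * V₁ᵀ) := by rw [hB, Matrix.mul_one]
  rw [hAΩ, Matrix.mul_sub]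
  nth_rewrite 1 [hA]
  simp only [Matrix.mul_assoc]
  abel

end Matrix

theorem deterministic_error_bound (m n k r : ℕ) (hk : k ≤ n)
    (A : Matrix (Fin m) (Fin n) ℝ)
    (U : Matrix (Fin m) (Fin n) ℝ) (V : Matrix (Fin n) (Fin n) ℝ)
    (σ : Fin n → ℝ)
    (hU : Uᵀ * U = 1) (hV : Vᵀ * V = 1)
    (hSVD : A = U * Matrix.diagonal σ * Vᵀ)
    (Ω : Matrix (Fin n) (Fin r) ℝ)
    -- the partition V = [V₁ V₂]
    (V₁ : Matrix (Fin n) (Fin k) ℝ) (V₂ : Matrix (Fin n) (Fin (n - k)) ℝ)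
    (hV₁ : V₁ = V.submatrix id (Fin.castLE hk))
    (hV₂ : V₂ = V.submatrix id (fun j : Fin (n - k) =>
      (⟨k + j.1, by omega⟩ : Fin n)))
    (S₂ : Matrix (Fin (n - k)) (Fin (n - k)) ℝ)
    (hS₂ : S₂ = Matrix.diagonal (fun j : Fin (n - k) => σ ⟨k + j.1, by omega⟩))
    (Ω₁ : Matrix (Fin k) (Fin r) ℝ) (hΩ₁ : Ω₁ = V₁ᵀ * Ω)
    (Ω₂ : Matrix (Fin (n - k)) (Fin r) ℝ) (hΩ₂ : Ω₂ = V₂ᵀ * Ω)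
    (hrank : Ω₁.rank = k)
    (Ω₁pinv : Matrix (Fin r) (Fin k) ℝ) (hpinv : IsMoorePenrose Ω₁ Ω₁pinv)
    (Y : Matrix (Fin m) (Fin r) ℝ) (hY : Y = A * Ω)
    -- P is the orthogonal projection onto the range of Y
    (P : Matrix (Fin m) (Fin m) ℝ) (hPsymm : Pᵀ = P) (hPidem : P * P = P)
    (hPY : P * Y = Y) :
    frob ((1 - P) * A) ^ 2 ≤ frob S₂ ^ 2 + frob (S₂ * Ω₂ * Ω₁pinv) ^ 2 := by
  change V₂ = V.submatrix id (Fin.natAddLE hk) at hV₂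
  change S₂ = diagonal (σ ∘ Fin.natAddLE hk) at hS₂
  have hV₁V₁ : V₁ᵀ * V₁ = 1 :=
    hV₁ ▸ transpose_submatrix_mul_submatrix_self V hV (Fin.castLE_injective hk)
  have hV₂V₂ : V₂ᵀ * V₂ = 1 :=
    hV₂ ▸ transpose_submatrix_mul_submatrix_self V hV (Fin.natAddLE_injective hk)
  have hV₂V₁ : V₂ᵀ * V₁ = 0 := by
    rw [hV₁, hV₂, transpose_submatrix_mul_submatrix, hV, one_submatrix_natAddLE_castLE]
  have hV₁₂ : V₁ * V₁ᵀ + V₂ * V₂ᵀ = 1 := by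
    rw [hV₁, hV₂, submatrix_castLE_mul_transpose_add_submatrix_natAddLE_mul_transpose,
      mul_eq_one_comm.mp hV]
  have hΩ₁pinv : V₁ᵀ * Ω * Ω₁pinv = 1 := by
    rw [← hΩ₁]
    exact mul_eq_one_of_mul_mul_self_of_rank_eq Ω₁ Ω₁pinv hpinv.1 (by simpa using hrank)
  have hresidual : A - Y * (Ω₁pinv * V₁ᵀ) = U.submatrix id (Fin.natAddLE hk) *
      (S₂ * V₂ᵀ - S₂ * Ω₂ * Ω₁pinv * V₁ᵀ) := by
    rw [hY, sub_mul_mul_mul_transpose_eq A Ω V₁ V₂ hV₁₂ Ω₁pinv hΩ₁pinv, hSVD, hV₂,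
      mul_diagonal_mul_transpose_mul_submatrix U σ V hV, ← hS₂, ← hV₂, ← hΩ₂]
    simp only [Matrix.mul_assoc, Matrix.mul_sub]
  calc frob ((1 - P) * A) ^ 2 ≤ frob (A - Y * (Ω₁pinv * V₁ᵀ)) ^ 2 :=
        frob_one_sub_mul_sq_le_frob_sub_mul_sq P hPsymm hPidem Y hPY A _
    _ = frob S₂ ^ 2 + frob (S₂ * Ω₂ * Ω₁pinv) ^ 2 := by
        rw [hresidual, frob_mul_sq_of_transpose_mul_self _
            (transpose_submatrix_mul_submatrix_self U hU (Fin.natAddLE_injective hk)),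
          frob_mul_transpose_sub_mul_transpose_sq V₂ V₁ hV₂V₂ hV₁V₁ hV₂V₁]
end

section
/- (Base case of the induction in Theorem 1.) Let B ∈ ℝ^{r×n}, R₀ ∈ ℝ^{r×n} with R₀R₀ᵀ = I. Suppose BR₀ᵀ = L₁T with L₁ᵀL₁ = I and T invertible upper triangular, and BᵀL₁ = R₁D₁ with R₁ᵀR₁ = I. If additionally B = BR₀ᵀR₀ (i.e., the rows of B lie in the row space of R₀), then B = L₁D₁ᵀR₁ᵀ. -/
open Matrix

theorem qr_iteration_base_case (r n : ℕ)
    (B R₀ : Matrix (Fin r) (Fin n) ℝ) (hR₀ : R₀ * R₀ᵀ = 1)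
    (L₁ T : Matrix (Fin r) (Fin r) ℝ)
    (hQR1 : B * R₀ᵀ = L₁ * T) (hL₁ : L₁ᵀ * L₁ = 1)
    (hT : T.BlockTriangular id) (hTinv : Invertible T)
    (R₁ : Matrix (Fin n) (Fin r) ℝ) (D₁ : Matrix (Fin r) (Fin r) ℝ)
    (hQR2 : Bᵀ * L₁ = R₁ * D₁) (hR₁ : R₁ᵀ * R₁ = 1)
    (hrow : B = B * R₀ᵀ * R₀) :
    B = L₁ * D₁ᵀ * R₁ᵀ := by
  have hLL : L₁ * L₁ᵀ = 1 := mul_eq_one_comm.mp hL₁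
  have h2 : L₁ᵀ * B = D₁ᵀ * R₁ᵀ := by
    have := congrArg Matrix.transpose hQR2
    simpa [Matrix.transpose_mul] using this
  calc B = (L₁ * L₁ᵀ) * B := by rw [hLL, Matrix.one_mul]
    _ = L₁ * (L₁ᵀ * B) := by rw [Matrix.mul_assoc]
    _ = L₁ * (D₁ᵀ * R₁ᵀ) := by rw [h2]
    _ = L₁ * D₁ᵀ * R₁ᵀ := by rw [Matrix.mul_assoc]
end
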